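/- Let X : [0,L] → ℝ^d be a path each of whose coordinates is a polynomial function of t, and let L ≥ 1. Let X̃ : ℝ → ℝ^d be the polynomial map X̃(y) = X(y) − X(0), which satisfies X̃(0) = 0. Then for every w ∈ T(ℝ^d), ⟨σ(X), w⟩ = ⟨exp_∘(L·𝟙), M_{X̃}(w)⟩, where 𝟙 denotes the single letter of the one-letter alphabet; equivalently, σ(X) = M_{X̃}^*(exp_∘(L·𝟙)). -/

import Mathlib

noncomputable section

open MeasureTheory

/-- Words in the alphabet `{1,…,d}`. -/
abbrev Word (d : ℕ) := List (Fin d)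

/-- `T(ℝ^d)`: the real vector space with basis the words in `{1,…,d}`. -/
abbrev Tens (d : ℕ) := Word d →₀ ℝ

namespace SigPaper

variable {d m s : ℕ}

/-- The basis word `w` as an element of `T(ℝ^d)`. -/
def wordT (w : Word d) : Tens d := Finsupp.single w 1

/-- The shuffle product of two words. -/
def shuffleWord : Word d → Word d → Tens d
  | [], v => Finsupp.single v 1
  | u, [] => Finsupp.single u 1
  | a :: u, b :: v =>
      Finsupp.mapDomain (fun w => a :: w) (shuffleWord u (b :: v)) +
      Finsupp.mapDomain (fun w => b :: w) (shuffleWord (a :: u) v)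
  termination_by u v => u.length + v.length
  decreasing_by all_goals first | (simp +arith +decide; done) | (simp <;> omega) | omega

/-- The shuffle product `⧢` on `T(ℝ^d)`, the bilinear extension of the shuffle of words. -/
def shuffle (x y : Tens d) : Tens d :=
  x.sum fun u a => y.sum fun v b => (a * b) • shuffleWord u v

/-- The operator appending the letter `i` at the end of every word (`T_i^+`). -/
def appendLetter (i : Fin d) (x : Tens d) : Tens d :=
  Finsupp.mapDomain (fun w => w ++ [i]) x

/-- The right half-shuffle of two words: `w ≻ (v∘i) = (w ⧢ v)∘i` (zero if the right word
is empty). -/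
def halfShuffleWord (u v : Word d) : Tens d :=
  match v.getLast? with
  | none => 0
  | some i => appendLetter i (shuffleWord u v.dropLast)

/-- The right half-shuffle `≻`, extended bilinearly. -/
def halfShuffle (x y : Tens d) : Tens d :=
  x.sum fun u a => y.sum fun v b => (a * b) • halfShuffleWord u v

/-- The letter-appending operator `T_i^+`. -/
def Tplus (i : Fin d) : Tens d → Tens d := appendLetter i

/-- `T_i^-` on a word: removes the last letter if it equals `i`, otherwise `0`. -/
def TminusWord (i : Fin d) (w : Word d) : Tens d :=
  match w.getLast? with
  | none => 0
  | some j => if j = i then Finsupp.single w.dropLast 1 else 0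

/-- The letter-removing operator `T_i^-`. -/
def Tminus (i : Fin d) (x : Tens d) : Tens d := x.sum fun w a => a • TminusWord i w

/-- The single-letter word `i` in `T(ℝ^d)`. -/
def letterT (i : Fin d) : Tens d := Finsupp.single [i] 1

/-- Shuffle powers `x^{⧢ n}`. -/
def shufflePow (x : Tens d) : ℕ → Tens d
  | 0 => Finsupp.single [] 1
  | n + 1 => shuffle (shufflePow x n) x

/-- Shuffle product of a list of elements. -/
def shuffleList : List (Tens d) → Tens d
  | [] => Finsupp.single [] 1
  | x :: xs => shuffle x (shuffleList xs)

/-- Image of the monomial `x^t` under `φ_d`: the shuffle product of its letters. -/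
def phiMon (t : Fin d →₀ ℕ) : Tens d :=
  shuffleList ((List.finRange d).map fun i => shufflePow (letterT i) (t i))

/-- The embedding `φ_d : ℝ[x₁,…,x_d] → (T(ℝ^d), ⧢)` sending the monomial
`x_{i₁}⋯x_{i_l}` to `i₁ ⧢ ⋯ ⧢ i_l`. -/
def phi (f : MvPolynomial (Fin d) ℝ) : Tens d :=
  f.support.sum fun t => f.coeff t • phiMon t

/-- A polynomial map `p : ℝ^d → ℝ^m`, given by `m` polynomials in `d` variables. -/
abbrev PolyMap (d m : ℕ) := Fin m → MvPolynomial (Fin d) ℝ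

/-- `k_p^{ij} = φ_d(∂p_i/∂x_j) ∈ T(ℝ^d)`. -/
def kP (p : PolyMap d m) (i : Fin m) (j : Fin d) : Tens d :=
  phi (MvPolynomial.pderiv j (p i))

/-- Auxiliary: `M_p` on reversed words, so that `M_p(e) = e` and
`M_p(w∘i) = Σ_j (M_p(w) ⧢ k_p^{ij})∘j`. -/
def MpRev (p : PolyMap d m) : List (Fin m) → Tens d
  | [] => Finsupp.single [] 1
  | i :: w => ∑ j : Fin d, appendLetter j (shuffle (MpRev p w) (kP p i j))

/-- `M_p` on a word. -/
def MpWord (p : PolyMap d m) (w : Word m) : Tens d := MpRev p w.reverse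

/-- The linear map `M_p : T(ℝ^m) → T(ℝ^d)`. -/
def Mp (p : PolyMap d m) (x : Tens m) : Tens d := x.sum fun w a => a • MpWord p w

/-- `X : [0,L] → ℝ^d` is piecewise continuously differentiable: there is a partition
`0 = t₀ ≤ t₁ ≤ ⋯ ≤ t_n = L` such that `X` is `C¹` on each subinterval. -/
def PiecewiseC1 (X : ℝ → Fin d → ℝ) (L : ℝ) : Prop :=
  ∃ (n : ℕ) (t : Fin (n + 1) → ℝ), Monotone t ∧ t 0 = 0 ∧ t (Fin.last n) = L ∧
    ∀ k : Fin n, ContDiffOn ℝ 1 X (Set.Icc (t k.castSucc) (t k.succ))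

/-- Iterated-integral signature coefficients, on reversed words:
`⟨σ(X|_{[0,t]}), w∘i⟩ = ∫_0^t ⟨σ(X|_{[0,r]}), w⟩ Ẋ^i_r dr`. -/
def sigRev (X : ℝ → Fin d → ℝ) : List (Fin d) → ℝ → ℝ
  | [], _ => 1
  | i :: w, t => ∫ r in (0:ℝ)..t, sigRev X w r * deriv (fun u => X u i) r

/-- `⟨σ(X|_{[0,L]}), w⟩`, the signature coefficient of the word `w`. -/
def sigWord (X : ℝ → Fin d → ℝ) (L : ℝ) (w : Word d) : ℝ := sigRev X w.reverse L

/-- The pairing `⟨σ(X|_{[0,L]}), x⟩` for `x ∈ T(ℝ^d)`. -/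
def sigT (X : ℝ → Fin d → ℝ) (L : ℝ) (x : Tens d) : ℝ :=
  x.sum fun w a => a * sigWord X L w

/-- The transformed path `p(X) : t ↦ p(X(t))`. -/
def pPath (p : PolyMap d m) (X : ℝ → Fin d → ℝ) : ℝ → Fin m → ℝ :=
  fun t i => MvPolynomial.eval (X t) (p i)

/-- The translated polynomial map `p̃(y) = p(y + x₀) − p(x₀)`, satisfying `p̃(0) = 0`. -/
def ptilde (p : PolyMap d m) (x0 : Fin d → ℝ) : PolyMap d m := fun i =>
  MvPolynomial.aeval (fun j => MvPolynomial.X j + MvPolynomial.C (x0 j)) (p i) -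
    MvPolynomial.C (MvPolynomial.eval x0 (p i))

/-- The pairing `⟨exp_∘(L·𝟙), x⟩` for `x ∈ T(ℝ¹)`: the coefficient of the word of
length `n` in `exp_∘(L·𝟙)` is `Lⁿ/n!`. -/
def expPair (L : ℝ) (x : Tens 1) : ℝ :=
  x.sum fun w a => a * (L ^ w.length / (w.length.factorial : ℝ))

/-- The pairing `⟨σ(X) ∘ σ(Y), x⟩` of the concatenation product of two signatures with
`x ∈ T(ℝ^d)`: on a word `w` it is `Σ_{u∘v = w} ⟨σ(X), u⟩·⟨σ(Y), v⟩`. -/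
def concatPair (X Y : ℝ → Fin d → ℝ) (L : ℝ) (x : Tens d) : ℝ :=
  x.sum fun w a =>
    a * ∑ k ∈ Finset.range (w.length + 1), sigWord X L (w.take k) * sigWord Y L (w.drop k)


/-! For a polynomial path `X = q`, the signature coefficients obey the recursion
`S_{w∘i}(t) = ∫₀ᵗ S_w(r) q_i'(r) dr`. On the other side, `y ↦ ⟨exp_∘(t·𝟙), y⟩` is a shuffle
character of `T(ℝ¹)`: the shuffle of two words of lengths `a` and `b` in one letter is
`(a+b choose a)` times the word of length `a+b`, and `tᵃ/a! · tᵇ/b! = (a+b choose a) tᵃ⁺ᵇ/(a+b)!`.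
Hence it maps `φ(f)` to `f(t)`, and appending the letter `𝟙` integrates it in `t`, so
`t ↦ ⟨exp_∘(t·𝟙), M_q(w)⟩` satisfies the same recursion. The map `M_q` only sees the
derivatives of `q`, so it is unchanged by the translation `X ↦ X̃`. -/

section ShuffleCharacter

variable (χ : Tens d →ₗ[ℝ] ℝ) (h_one : χ (Finsupp.single [] 1) = 1)
  (h_shuffle : ∀ x y, χ (shuffle x y) = χ x * χ y)
include h_one h_shuffle

lemma map_shufflePow (x : Tens d) (n : ℕ) : χ (shufflePow x n) = χ x ^ n := by
  induction n with
  | zero => exact h_one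
  | succ n ih => rw [shufflePow, h_shuffle, ih, pow_succ]

lemma map_shuffleList (l : List (Tens d)) : χ (shuffleList l) = (l.map χ).prod := by
  induction l with
  | nil => exact h_one
  | cons x l ih => rw [shuffleList, h_shuffle, ih, List.map_cons, List.prod_cons]

theorem map_phi_of_shuffle (f : MvPolynomial (Fin d) ℝ) :
    χ (phi f) = MvPolynomial.eval (fun i => χ (letterT i)) f := by
  rw [phi, map_sum, MvPolynomial.eval_eq']
  refine Finset.sum_congr rfl fun t _ => ?_
  rw [map_smul, smul_eq_mul, phiMon, map_shuffleList χ h_one h_shuffle, Fin.prod_univ_def,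
    List.map_map]
  simp only [Function.comp_def, map_shufflePow χ h_one h_shuffle]

end ShuffleCharacter

lemma word_fin_one_eq_replicate (w : Word 1) : w = List.replicate w.length 0 :=
  List.eq_replicate_iff.2 ⟨rfl, fun b _ => Subsingleton.elim b 0⟩

theorem shuffleWord_fin_one (u v : Word 1) :
    shuffleWord u v = Finsupp.single (List.replicate (u.length + v.length) 0)
      (((u.length + v.length).choose u.length : ℕ) : ℝ) := by
  fun_induction shuffleWord u v with
  | case1 v => simp [← word_fin_one_eq_replicate v]
  | case2 u _ => simp [← word_fin_one_eq_replicate u]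
  | case3 a u b v ih₁ ih₂ =>
    obtain rfl := Subsingleton.elim a 0
    obtain rfl := Subsingleton.elim b 0
    rw [ih₁, ih₂, Finsupp.mapDomain_single, Finsupp.mapDomain_single]
    simp only [List.length_cons, ← List.replicate_succ]
    rw [show u.length + (v.length + 1) + 1 = u.length + 1 + (v.length + 1) by omega,
      show u.length + 1 + v.length + 1 = u.length + 1 + (v.length + 1) by omega,
      ← Finsupp.single_add, ← Nat.cast_add]
    congr 2
    rw [show u.length + 1 + (v.length + 1) = u.length + (v.length + 1) + 1 by omega,
      Nat.choose_succ_succ', Nat.add_right_comm u.length 1, Nat.add_assoc]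

def expCoeff (L : ℝ) (n : ℕ) : ℝ := L ^ n / n.factorial

def expPairₗ (L : ℝ) : Tens 1 →ₗ[ℝ] ℝ :=
  Finsupp.linearCombination ℝ fun w : Word 1 => expCoeff L w.length

lemma expPairₗ_apply (L : ℝ) (x : Tens 1) : expPairₗ L x = expPair L x := rfl

lemma expPair_single (L : ℝ) (w : Word 1) (c : ℝ) :
    expPair L (Finsupp.single w c) = c * expCoeff L w.length :=
  Finsupp.sum_single_index (zero_mul _)

lemma expPair_single_nil (L : ℝ) : expPair L (Finsupp.single [] 1) = 1 := by
  simp [expPair_single, expCoeff]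

lemma expPair_finsuppSum {α M : Type*} [Zero M] (L : ℝ) (x : α →₀ M) (f : α → M → Tens 1) :
    expPair L (x.sum f) = x.sum fun a c => expPair L (f a c) :=
  map_finsuppSum (expPairₗ L) x f

lemma expPair_add (L : ℝ) (x y : Tens 1) : expPair L (x + y) = expPair L x + expPair L y :=
  map_add (expPairₗ L) x y

lemma expPair_smul (L c : ℝ) (x : Tens 1) : expPair L (c • x) = c * expPair L x :=
  map_smul (expPairₗ L) c x

lemma expCoeff_mul_expCoeff (L : ℝ) (a b : ℕ) :
    expCoeff L a * expCoeff L b = ((a + b).choose a : ℝ) * expCoeff L (a + b) := by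
  simp only [expCoeff, pow_add]
  field_simp
  rw [← Nat.add_choose_mul_factorial_mul_factorial, Nat.choose_symm_add]
  push_cast
  ring

theorem expPair_shuffle (L : ℝ) (x y : Tens 1) :
    expPair L (shuffle x y) = expPair L x * expPair L y := by
  simp only [shuffle, expPair_finsuppSum, expPair_smul, shuffleWord_fin_one, expPair_single,
    List.length_replicate, ← expCoeff_mul_expCoeff]
  rw [expPair, Finsupp.sum_mul]
  refine Finsupp.sum_congr fun u _ => ?_
  rw [expPair, Finsupp.mul_sum]
  refine Finsupp.sum_congr fun v _ => ?_
  simp only [expCoeff]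
  ring

theorem expPair_phi (L : ℝ) (f : MvPolynomial (Fin 1) ℝ) :
    expPair L (phi f) = MvPolynomial.eval (fun _ => L) f := by
  have h_letter (i : Fin 1) : expPairₗ L (letterT i) = L := by
    simp [expPairₗ_apply, letterT, expPair_single, expCoeff]
  simpa only [h_letter, expPairₗ_apply] using
    map_phi_of_shuffle (expPairₗ L) (expPair_single_nil L) (expPair_shuffle L) f

lemma integral_expCoeff (t : ℝ) (n : ℕ) :
    ∫ r in (0 : ℝ)..t, expCoeff r n = expCoeff t (n + 1) := by
  simp only [expCoeff, div_eq_mul_inv, intervalIntegral.integral_mul_const, integral_pow,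
    Nat.factorial_succ]
  push_cast
  field_simp
  ring

lemma continuous_expPair (x : Tens 1) : Continuous fun L => expPair L x := by
  unfold expPair Finsupp.sum
  fun_prop

theorem expPair_appendLetter (t : ℝ) (i : Fin 1) (x : Tens 1) :
    expPair t (appendLetter i x) = ∫ r in (0 : ℝ)..t, expPair r x := by
  induction x using Finsupp.induction_linear with
  | zero => simp [appendLetter, expPair]
  | add x y hx hy =>
    rw [appendLetter, Finsupp.mapDomain_add, ← appendLetter, ← appendLetter]
    simp only [expPair_add]
    rw [hx, hy, intervalIntegral.integral_add]
    · exact (continuous_expPair x).intervalIntegrable 0 t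
    · exact (continuous_expPair y).intervalIntegrable 0 t
  | single w c =>
    simp only [appendLetter, Finsupp.mapDomain_single, expPair_single,
      intervalIntegral.integral_const_mul, integral_expCoeff, List.length_append,
      List.length_singleton]

lemma hasDerivAt_eval_fin_one (f : MvPolynomial (Fin 1) ℝ) (r : ℝ) :
    HasDerivAt (fun t => MvPolynomial.eval (fun _ => t) f)
      (MvPolynomial.eval (fun _ => r) (MvPolynomial.pderiv 0 f)) r := by
  induction f using MvPolynomial.induction_on with
  | C a => simpa using hasDerivAt_const r a
  | add f g hf hg =>
    simp only [map_add]
    exact hf.add hg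
  | mul_X f j hf =>
    obtain rfl := Subsingleton.elim j 0
    simp only [map_mul, map_add, MvPolynomial.eval_X, MvPolynomial.pderiv_mul,
      MvPolynomial.pderiv_X_self, mul_one]
    simpa only [mul_one] using hf.fun_mul (hasDerivAt_id' r)

lemma MpRev_sub_C (p : PolyMap d m) (c : Fin m → ℝ) :
    MpRev (fun i => p i - MvPolynomial.C (c i)) = MpRev p := by
  funext w
  induction w with
  | nil => rfl
  | cons i w ih => simp [MpRev, kP, ih]

lemma Mp_sub_C (p : PolyMap d m) (c : Fin m → ℝ) :
    Mp (fun i => p i - MvPolynomial.C (c i)) = Mp p := by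
  funext x
  simp only [Mp, MpWord, MpRev_sub_C]

theorem sigRev_polynomial_path (p : PolyMap 1 d) (w : List (Fin d)) (t : ℝ) :
    sigRev (fun t i => MvPolynomial.eval (fun _ => t) (p i)) w t = expPair t (MpRev p w) := by
  induction w generalizing t with
  | nil => exact (expPair_single_nil t).symm
  | cons i w ih =>
    rw [sigRev, MpRev, Fin.sum_univ_one, expPair_appendLetter]
    refine intervalIntegral.integral_congr fun r _ => ?_
    rw [expPair_shuffle, ← ih r, kP, expPair_phi, (hasDerivAt_eval_fin_one (p i) r).deriv]

theorem signature_polynomial_path_general (d : ℕ) (L : ℝ) (q : PolyMap 1 d) :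
    ∀ x : Tens d,
      sigT (fun t i => MvPolynomial.eval (fun _ => t) (q i)) L x =
        expPair L
          (Mp (fun i => q i -
            MvPolynomial.C (MvPolynomial.eval (fun _ => (0 : ℝ)) (q i))) x) := by
  intro x
  rw [Mp_sub_C, Mp, expPair_finsuppSum, sigT]
  refine Finsupp.sum_congr fun w _ => ?_
  rw [expPair_smul, sigWord, MpWord, sigRev_polynomial_path]

/-- For a path `X : [0,L] → ℝ^d` (with `L ≥ 1`) whose coordinates are
polynomial functions of `t`, given by the polynomial map `q : ℝ → ℝ^d`, and with
`X̃(y) = X(y) − X(0)`, one has `⟨σ(X), w⟩ = ⟨exp_∘(L·𝟙), M_{X̃}(w)⟩` for all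
`w ∈ T(ℝ^d)`, i.e. `σ(X) = M_{X̃}^*(exp_∘(L·𝟙))`. -/
theorem signature_polynomial_path (d : ℕ) (L : ℝ) (hL : 1 ≤ L) (q : PolyMap 1 d) :
    ∀ x : Tens d,
      sigT (fun t i => MvPolynomial.eval (fun _ => t) (q i)) L x =
        expPair L
          (Mp (fun i => q i -
            MvPolynomial.C (MvPolynomial.eval (fun _ => (0 : ℝ)) (q i))) x) :=
  signature_polynomial_path_general d L q

end SigPaper
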